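/- arXiv:0904.2638 — 5 statements merged into one kernel-verified Lean document; each statement's English description precedes it below -/
import Mathlib

section
/- Let r1, r2 : E → ℕ be reward functions on a finite edge set E, let |r2| = max over e ∈ E of r2(e), let S be a finite set with |S| = n, and set m = n²·|r2| + 1. Define r* = m·r1 + r2. Then for any two cycles C1, C2 of lengths at most n (each length ≥ 1) with total r1-rewards α1, α2 and total r2-rewards β1, β2, if α1/|C1| > α2/|C2| then (m·α1 + β1)/|C1| > (m·α2 + β2)/|C2|. -/
/-!
If the `r1`-means differ then, after clearing denominators, `α2·|C1| + 1 ≤ α1·|C2|`; multiplied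
by `m`, this gap of at least `m` exceeds `β2·|C1| ≤ (n·|r2|)·n = n²·|r2| < m`, the largest
amount the `r2`-rewards can contribute.
-/

open Finset

/-- Total reward of a cycle (a nonempty list of edges). -/
def cycleReward {E : Type*} (r : E → ℕ) (C : List E) : ℕ := (C.map r).sum

lemma cycleReward_le_length_mul_sup {E : Type*} [Fintype E] (r : E → ℕ) (C : List E) :
    cycleReward r C ≤ C.length * univ.sup r := by
  simpa [cycleReward] using List.sum_le_card_nsmul (C.map r) (univ.sup r) (by simp [le_sup])

lemma scaled_add_mul_lt_scaled_add_mul {m a₁ a₂ b₁ b₂ l₁ l₂ : ℕ}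
    (hb : b₂ * l₁ < m) (ha : a₂ * l₁ < a₁ * l₂) :
    (m * a₂ + b₂) * l₁ < (m * a₁ + b₁) * l₂ :=
  calc (m * a₂ + b₂) * l₁ = m * (a₂ * l₁) + b₂ * l₁ := by ring
    _ < m * (a₂ * l₁ + 1) := by rw [mul_add_one]; omega
    _ ≤ m * (a₁ * l₂) := Nat.mul_le_mul_left m ha
    _ ≤ (m * a₁ + b₁) * l₂ := by
      rw [← mul_assoc]; exact Nat.mul_le_mul_right _ (Nat.le_add_right _ _)

lemma natCast_div_lt_natCast_div_iff {a₁ a₂ l₁ l₂ : ℕ} (hl₁ : 0 < l₁) (hl₂ : 0 < l₂) :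
    (a₂ : ℚ) / l₂ < a₁ / l₁ ↔ a₂ * l₁ < a₁ * l₂ := by
  rw [div_lt_div_iff₀ (by exact_mod_cast hl₂) (by exact_mod_cast hl₁)]
  exact_mod_cast Iff.rfl

theorem scaling_reduction_separates_general {E : Type*} [Fintype E]
    (r2 : E → ℕ) (n : ℕ)
    (R : ℕ) (hR : R = Finset.univ.sup r2)
    (m : ℕ) (hm : m = n ^ 2 * R + 1)
    (C1 C2 : List E)
    (h1len : 1 ≤ C1.length) (h1n : C1.length ≤ n)
    (h2len : 1 ≤ C2.length) (h2n : C2.length ≤ n)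
    (α1 α2 β1 β2 : ℕ)
    (hβ2 : β2 = cycleReward r2 C2)
    (hgt : (α1 : ℚ) / C1.length > (α2 : ℚ) / C2.length) :
    ((m * α1 + β1 : ℚ)) / C1.length > ((m * α2 + β2 : ℚ)) / C2.length := by
  have hβ2_le : β2 ≤ n * R := hβ2 ▸ hR ▸
    (cycleReward_le_length_mul_sup r2 C2).trans (Nat.mul_le_mul_right _ h2n)
  have hsmall : β2 * C1.length < m :=
    calc β2 * C1.length ≤ n * R * n := Nat.mul_le_mul hβ2_le h1n
      _ < m := by rw [hm]; nlinarith
  have key := scaled_add_mul_lt_scaled_add_mul (b₁ := β1) hsmall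
    ((natCast_div_lt_natCast_div_iff h1len h2len).mp hgt)
  exact_mod_cast (natCast_div_lt_natCast_div_iff h1len h2len).mpr key

/-- Correctness of the weight-scaling reduction: with `m = n² · |r2| + 1`,
    the combined reward `r* = m·r1 + r2` separates cycles whose `r1`-means differ. -/
theorem scaling_reduction_separates {E : Type*} [Fintype E] [Nonempty E]
    (r1 r2 : E → ℕ) (n : ℕ) (S : Type*) [Fintype S] (hS : Fintype.card S = n)
    (R : ℕ) (hR : R = Finset.univ.sup r2)
    (m : ℕ) (hm : m = n ^ 2 * R + 1)
    (C1 C2 : List E)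
    (h1len : 1 ≤ C1.length) (h1n : C1.length ≤ n)
    (h2len : 1 ≤ C2.length) (h2n : C2.length ≤ n)
    (α1 α2 β1 β2 : ℕ)
    (hα1 : α1 = cycleReward r1 C1) (hα2 : α2 = cycleReward r1 C2)
    (hβ1 : β1 = cycleReward r2 C1) (hβ2 : β2 = cycleReward r2 C2)
    (hgt : (α1 : ℚ) / C1.length > (α2 : ℚ) / C2.length) :
    ((m * α1 + β1 : ℚ)) / C1.length > ((m * α2 + β2 : ℚ)) / C2.length :=
  scaling_reduction_separates_general r2 n R hR m hm C1 C2 h1len h1n h2len h2n α1 α2 β1 β2 hβ2 hgt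
end

section
/- Let r1, r2 : E → ℕ with |r2| = max r2, |S| = n, m = n²·|r2| + 1, and r* = m·r1 + r2. For any two cycles C1, C2 of lengths at most n, the mean of r* on C1 is at least the mean of r* on C2 if and only if the pair (mean of r1, mean of r2) on C1 is lexicographically at least the pair on C2 — provided the r1-means are equal; and if the r1-means differ, the order of r*-means agrees with the order of r1-means. -/
open Finset

/-- Mean reward of a cycle. -/
noncomputable def cycleMean {E : Type*} (r : E → ℕ) (C : List E) : ℚ :=
  (cycleReward r C : ℚ) / C.length

/-!
Means of cycles of length at most `n` are fractions with denominators at most `n`, so two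
distinct `r1`-means differ by at least `1 / n²`. Scaling `r1` by `m = n² R + 1` turns such a gap
into a gap of more than `R` in the `r*`-means, which the `r2`-means (all in `[0, R]`) cannot
compensate; when the `r1`-means agree, the `r*`-means compare as the `r2`-means.
-/

theorem one_div_sq_le_div_sub_div {a b p q n : ℕ} (hp : 0 < p) (hpn : p ≤ n)
    (hq : 0 < q) (hqn : q ≤ n) (h : (a : ℚ) / p < b / q) :
    1 / (n : ℚ) ^ 2 ≤ b / q - a / p := by
  have hpq : 0 < p * q := Nat.mul_pos hp hq
  have hcross : a * q + 1 ≤ b * p := by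
    rw [div_lt_div_iff₀ (by positivity) (by positivity)] at h
    exact_mod_cast h
  calc 1 / (n : ℚ) ^ 2 ≤ 1 / ((p * q : ℕ) : ℚ) := by
        gcongr
        exact_mod_cast (by nlinarith : p * q ≤ n ^ 2)
    _ ≤ ((b * p : ℕ) - (a * q : ℕ) : ℚ) / ((p * q : ℕ) : ℚ) := by
        gcongr
        have : ((a * q + 1 : ℕ) : ℚ) ≤ (b * p : ℕ) := by exact_mod_cast hcross
        push_cast at this ⊢
        linarith
    _ = b / q - a / p := by
        push_cast
        field_simp

section

variable {E : Type*}

theorem cycleMean_nonneg (r : E → ℕ) (C : List E) : 0 ≤ cycleMean r C := by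
  unfold cycleMean
  positivity

theorem cycleMean_le_of_forall_le {r : E → ℕ} {R : ℕ} (hR : ∀ e, r e ≤ R) {C : List E}
    (hC : 1 ≤ C.length) : cycleMean r C ≤ R := by
  have hreward : cycleReward r C ≤ C.length * R := by
    simpa [cycleReward] using List.sum_le_card_nsmul (C.map r) R (by simpa using fun e _ => hR e)
  rw [cycleMean, div_le_iff₀ (by exact_mod_cast hC), mul_comm]
  exact_mod_cast hreward

theorem cycleMean_eq_mul_add {r1 r2 rstar : E → ℕ} {m : ℕ}
    (hstar : ∀ e, rstar e = m * r1 e + r2 e) (C : List E) :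
    cycleMean rstar C = m * cycleMean r1 C + cycleMean r2 C := by
  have hreward : cycleReward rstar C = m * cycleReward r1 C + cycleReward r2 C := by
    rw [show rstar = fun e => m * r1 e + r2 e from funext hstar]
    simp [cycleReward, List.sum_map_add, List.sum_map_mul_left]
  rw [cycleMean, cycleMean, cycleMean, hreward]
  push_cast
  ring

theorem cycleMean_lt_of_cycleMean_lt {r1 r2 rstar : E → ℕ} {n R : ℕ}
    (hR : ∀ e, r2 e ≤ R) (hstar : ∀ e, rstar e = (n ^ 2 * R + 1) * r1 e + r2 e)
    {C1 C2 : List E} (h1len : 1 ≤ C1.length) (h1n : C1.length ≤ n)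
    (h2len : 1 ≤ C2.length) (h2n : C2.length ≤ n)
    (h : cycleMean r1 C1 < cycleMean r1 C2) :
    cycleMean rstar C1 < cycleMean rstar C2 := by
  have hgap : 1 / (n : ℚ) ^ 2 ≤ cycleMean r1 C2 - cycleMean r1 C1 :=
    one_div_sq_le_div_sub_div h1len h1n h2len h2n h
  have hn : (0 : ℚ) < (n : ℚ) ^ 2 := by
    have : 0 < n := h1len.trans h1n
    positivity
  -- a gain of at least `1 / n²` in `r1`, scaled by `n² R + 1`, outweighs any loss in `r2`
  have hscaled : (R : ℚ) ≤ (n : ℚ) ^ 2 * R * (cycleMean r1 C2 - cycleMean r1 C1) := by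
    rw [div_le_iff₀ hn] at hgap
    nlinarith [(Nat.cast_nonneg R : (0 : ℚ) ≤ R)]
  have hC1_le := cycleMean_le_of_forall_le hR h1len
  have hC2_nonneg := cycleMean_nonneg r2 C2
  rw [cycleMean_eq_mul_add hstar, cycleMean_eq_mul_add hstar]
  push_cast
  nlinarith

end

theorem scaling_reduction_correct_general {E : Type*} [Fintype E]
    (r1 r2 : E → ℕ) (n : ℕ)
    (R : ℕ) (hR : R = Finset.univ.sup r2)
    (m : ℕ) (hm : m = n ^ 2 * R + 1)
    (rstar : E → ℕ) (hstar : ∀ e, rstar e = m * r1 e + r2 e)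
    (C1 C2 : List E)
    (h1len : 1 ≤ C1.length) (h1n : C1.length ≤ n)
    (h2len : 1 ≤ C2.length) (h2n : C2.length ≤ n) :
    (cycleMean r1 C1 = cycleMean r1 C2 →
      (cycleMean rstar C1 ≥ cycleMean rstar C2 ↔
        (cycleMean r1 C1 > cycleMean r1 C2 ∨
          (cycleMean r1 C1 = cycleMean r1 C2 ∧ cycleMean r2 C1 ≥ cycleMean r2 C2)))) ∧
    (cycleMean r1 C1 ≠ cycleMean r1 C2 →
      (cycleMean rstar C1 > cycleMean rstar C2 ↔ cycleMean r1 C1 > cycleMean r1 C2)) := by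
  subst hm
  have hR2 : ∀ e, r2 e ≤ R := fun e => hR ▸ Finset.le_sup (Finset.mem_univ e)
  have hmono {D1 D2 : List E} (h1 : 1 ≤ D1.length) (h1' : D1.length ≤ n)
      (h2 : 1 ≤ D2.length) (h2' : D2.length ≤ n) :=
    cycleMean_lt_of_cycleMean_lt (r1 := r1) hR2 hstar h1 h1' h2 h2'
  refine ⟨fun heq => ?_, fun hne => ⟨fun hlt => ?_, hmono h2len h2n h1len h1n⟩⟩
  · rw [cycleMean_eq_mul_add hstar, cycleMean_eq_mul_add hstar, heq]
    simp
  · by_contra hle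
    exact (hmono h1len h1n h2len h2n (lt_of_le_of_ne (not_lt.mp hle) hne)).not_gt hlt

/-- Full correctness of the reduction from two-dimensional lexicographic
    mean-payoff comparison of cycles to one-dimensional mean-payoff comparison:
    if the `r1`-means are equal, the `r*`-means compare exactly as the
    lexicographic pairs of means; if the `r1`-means differ, the order of the
    `r*`-means agrees with the order of the `r1`-means. -/
theorem scaling_reduction_correct {E : Type*} [Fintype E] [Nonempty E]
    (r1 r2 : E → ℕ) (n : ℕ) (S : Type*) [Fintype S] (hS : Fintype.card S = n)
    (R : ℕ) (hR : R = Finset.univ.sup r2)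
    (m : ℕ) (hm : m = n ^ 2 * R + 1)
    (rstar : E → ℕ) (hstar : ∀ e, rstar e = m * r1 e + r2 e)
    (C1 C2 : List E)
    (h1len : 1 ≤ C1.length) (h1n : C1.length ≤ n)
    (h2len : 1 ≤ C2.length) (h2n : C2.length ≤ n) :
    (cycleMean r1 C1 = cycleMean r1 C2 →
      (cycleMean rstar C1 ≥ cycleMean rstar C2 ↔
        (cycleMean r1 C1 > cycleMean r1 C2 ∨
          (cycleMean r1 C1 = cycleMean r1 C2 ∧ cycleMean r2 C1 ≥ cycleMean r2 C2)))) ∧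
    (cycleMean r1 C1 ≠ cycleMean r1 C2 →
      (cycleMean rstar C1 > cycleMean rstar C2 ↔ cycleMean r1 C1 > cycleMean r1 C2)) :=
  scaling_reduction_correct_general r1 r2 n R hR m hm rstar hstar C1 C2 h1len h1n h2len h2n
end

section
/- There is no eventually-periodic (lasso) sequence of rewards aₙ ∈ {0,1} that (i) contains infinitely many 0s and (ii) has liminf_{n→∞} (1/n)·Σ_{i<n} aᵢ = 1; but for every ε > 0 there is a periodic sequence with infinitely many 0s whose mean payoff is at least 1 − ε (namely, a 0 every k steps for k > 1/ε). Moreover there exists a (non-eventually-periodic) sequence with infinitely many 0s and mean payoff exactly 1. -/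
/-!
A `{0,1}`-valued sequence has prefix average `1 - z(n)/n`, where `z(n)` counts the zeros before
`n`. A lasso with a zero in its loop has a zero at every `n₀ + j p`, so `z(n)/n` stays above
`1/(n₀ + p)` along `n = n₀ + k p + 1` and the mean payoff is below `1`. Placing a zero every `p`
steps gives `z(n)/n ≤ 1/p`, while placing zeros at the squares gives `z(n) ≤ √n + 1 = o(n)`.
-/

open Filter Finset

noncomputable def meanPayoff (a : ℕ → ℝ) : ℝ :=
  Filter.liminf (fun n : ℕ => (∑ i ∈ Finset.range n, a i) / n) atTop

open Topology

noncomputable def prefixAvg (a : ℕ → ℝ) (n : ℕ) : ℝ :=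
  (∑ i ∈ range n, a i) / n

section MeanPayoff

variable {a : ℕ → ℝ}

lemma prefixAvg_nonneg (h0 : ∀ n, 0 ≤ a n) (n : ℕ) : 0 ≤ prefixAvg a n :=
  div_nonneg (sum_nonneg fun i _ => h0 i) n.cast_nonneg

lemma prefixAvg_le_one (h1 : ∀ n, a n ≤ 1) (n : ℕ) : prefixAvg a n ≤ 1 := by
  rcases n.eq_zero_or_pos with rfl | hn
  · simp [prefixAvg]
  rw [prefixAvg, div_le_one (by exact_mod_cast hn)]
  simpa using sum_le_card_nsmul (range n) a 1 fun i _ => h1 i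

lemma meanPayoff_le_of_frequently_le (h0 : ∀ n, 0 ≤ a n) {c : ℝ}
    (h : ∃ᶠ n in atTop, prefixAvg a n ≤ c) : meanPayoff a ≤ c :=
  liminf_le_of_frequently_le h (isBoundedUnder_of ⟨0, prefixAvg_nonneg h0⟩)

lemma le_meanPayoff_of_eventually_le (h1 : ∀ n, a n ≤ 1) {c : ℝ}
    (h : ∀ᶠ n in atTop, c ≤ prefixAvg a n) : c ≤ meanPayoff a :=
  le_liminf_of_le (isBoundedUnder_of ⟨1, prefixAvg_le_one h1⟩).isCoboundedUnder_ge h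

lemma prefixAvg_eq_one_sub_zeroDensity (ha : ∀ n, a n = 0 ∨ a n = 1) {n : ℕ} (hn : n ≠ 0) :
    prefixAvg a n = 1 - (#{i ∈ range n | a i = 0} : ℝ) / n := by
  have hsplit : ∀ i, a i = 1 - if a i = 0 then 1 else 0 := fun i => by
    rcases ha i with h | h <;> simp [h]
  rw [prefixAvg, sum_congr rfl fun i _ => hsplit i, sum_sub_distrib, sum_boole]
  simp [sub_div, hn]

lemma meanPayoff_eq_one_of_tendsto_zeroDensity (ha : ∀ n, a n = 0 ∨ a n = 1)
    (h : Tendsto (fun n => (#{i ∈ range n | a i = 0} : ℝ) / n) atTop (𝓝 0)) :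
    meanPayoff a = 1 := by
  have hlim : Tendsto (prefixAvg a) atTop (𝓝 1) := by
    refine (by simpa using h.const_sub 1 : Tendsto _ _ (𝓝 (1 : ℝ))).congr' ?_
    filter_upwards [eventually_ne_atTop 0] with n hn
    exact (prefixAvg_eq_one_sub_zeroDensity ha hn).symm
  exact hlim.liminf_eq

end MeanPayoff

lemma apply_add_mul_eq_of_periodic_from {α : Type*} {a : ℕ → α} {N p n : ℕ}
    (hper : ∀ m, N ≤ m → a (m + p) = a m) (hn : N ≤ n) (j : ℕ) : a (n + j * p) = a n := by
  induction j with
  | zero => simp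
  | succ j ih => rw [add_one_mul, ← add_assoc, hper _ (hn.trans (Nat.le_add_right _ _)), ih]

lemma le_card_filter_range_of_arithProg {P : ℕ → Prop} [DecidablePred P] {n₀ p : ℕ}
    (hp : 0 < p) (hP : ∀ j, P (n₀ + j * p)) (k : ℕ) :
    k + 1 ≤ #{i ∈ range (n₀ + k * p + 1) | P i} := by
  have hinj : Set.InjOn (fun j => n₀ + j * p) (range (k + 1)) := fun i _ j _ hij =>
    Nat.eq_of_mul_eq_mul_right hp (Nat.add_left_cancel hij)
  calc k + 1 = #((range (k + 1)).image fun j => n₀ + j * p) := by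
        rw [card_image_of_injOn hinj, card_range]
    _ ≤ _ := by
        refine card_le_card fun i hi => ?_
        obtain ⟨j, hj, rfl⟩ := mem_image.mp hi
        have : j * p ≤ k * p := Nat.mul_le_mul_right p (by simpa [Nat.lt_succ_iff] using hj)
        simp only [mem_filter, mem_range]
        exact ⟨by omega, hP j⟩

lemma meanPayoff_le_of_zero_on_arithProg {a : ℕ → ℝ} (ha : ∀ n, a n = 0 ∨ a n = 1)
    {n₀ p : ℕ} (hp : 0 < p) (hz : ∀ j, a (n₀ + j * p) = 0) :
    meanPayoff a ≤ 1 - 1 / (n₀ + p) := by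
  have h0 : ∀ n, 0 ≤ a n := fun n => by rcases ha n with h | h <;> simp [h]
  refine meanPayoff_le_of_frequently_le h0 (frequently_atTop.mpr fun b => ?_)
  refine ⟨n₀ + b * p + 1, by nlinarith, ?_⟩
  rw [prefixAvg_eq_one_sub_zeroDensity ha (Nat.succ_ne_zero _), sub_le_sub_iff_left]
  have hcount : ((b + 1 : ℕ) : ℝ) ≤ #{i ∈ range (n₀ + b * p + 1) | a i = 0} := by
    exact_mod_cast le_card_filter_range_of_arithProg hp hz b
  have hp1 : (1 : ℝ) ≤ p := by exact_mod_cast hp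
  rw [div_le_div_iff₀ (by positivity) (by positivity)]
  push_cast at hcount ⊢
  nlinarith [n₀.cast_nonneg (α := ℝ), b.cast_nonneg (α := ℝ)]

lemma meanPayoff_lt_one_of_eventually_periodic {a : ℕ → ℝ} (ha : ∀ n, a n = 0 ∨ a n = 1)
    {N p : ℕ} (hp : 0 < p) (hper : ∀ n, N ≤ n → a (n + p) = a n)
    (hzero : ∀ N, ∃ n, N ≤ n ∧ a n = 0) : meanPayoff a < 1 := by
  obtain ⟨n₀, hn₀, hz⟩ := hzero N
  have hprog : ∀ j, a (n₀ + j * p) = 0 := fun j => by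
    rw [apply_add_mul_eq_of_periodic_from hper hn₀, hz]
  have hpos : (0 : ℝ) < 1 / (n₀ + p) := by positivity
  linarith [meanPayoff_le_of_zero_on_arithProg ha hp hprog]

noncomputable def zeroEvery (p n : ℕ) : ℝ := if p ∣ n + 1 then 0 else 1

lemma zeroEvery_eq_zero_or_one (p n : ℕ) : zeroEvery p n = 0 ∨ zeroEvery p n = 1 := by
  unfold zeroEvery; split_ifs <;> simp

lemma zeroEvery_le_one (p n : ℕ) : zeroEvery p n ≤ 1 := by
  unfold zeroEvery; split_ifs <;> norm_num

lemma zeroEvery_add_period (p n : ℕ) : zeroEvery p (n + p) = zeroEvery p n := by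
  simp only [zeroEvery, add_right_comm n p 1, Nat.dvd_add_self_right]

lemma exists_ge_zeroEvery_eq_zero {p : ℕ} (hp : 0 < p) (N : ℕ) :
    ∃ n, N ≤ n ∧ zeroEvery p n = 0 := by
  refine ⟨p * N + (p - 1), by nlinarith [Nat.sub_add_cancel hp], ?_⟩
  have : p * N + (p - 1) + 1 = p * (N + 1) := by rw [mul_add_one]; omega
  simp [zeroEvery, this]

lemma one_sub_inv_le_meanPayoff_zeroEvery {p : ℕ} (hp : 0 < p) :
    1 - 1 / (p : ℝ) ≤ meanPayoff (zeroEvery p) := by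
  refine le_meanPayoff_of_eventually_le (zeroEvery_le_one p) ?_
  filter_upwards [eventually_ne_atTop 0] with n hn
  rw [prefixAvg_eq_one_sub_zeroDensity (zeroEvery_eq_zero_or_one p) hn, sub_le_sub_iff_left]
  have hfilter : #{i ∈ range n | zeroEvery p i = 0} = n / p := by
    simp [zeroEvery, Nat.card_multiples]
  rw [hfilter, div_le_iff₀ (by positivity), div_mul_eq_mul_div, le_div_iff₀ (by positivity),
    one_mul]
  exact_mod_cast Nat.div_mul_le_self n p

noncomputable def zeroAtSquares (n : ℕ) : ℝ := if IsSquare n then 0 else 1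

lemma zeroAtSquares_eq_zero_or_one (n : ℕ) : zeroAtSquares n = 0 ∨ zeroAtSquares n = 1 := by
  unfold zeroAtSquares; split_ifs <;> simp

lemma exists_ge_zeroAtSquares_eq_zero (N : ℕ) : ∃ n, N ≤ n ∧ zeroAtSquares n = 0 :=
  ⟨N * N, Nat.le_mul_self N, by simp [zeroAtSquares]⟩

lemma card_filter_range_isSquare_le (n : ℕ) : #{i ∈ range n | IsSquare i} ≤ n.sqrt + 1 := by
  calc #{i ∈ range n | IsSquare i} ≤ #((range (n.sqrt + 1)).image fun r => r * r) := by
        refine card_le_card fun i hi => ?_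
        obtain ⟨hin, r, rfl⟩ := mem_filter.mp hi
        exact mem_image.mpr ⟨r, mem_range.mpr (Nat.lt_succ_of_le
          (Nat.le_sqrt.mpr (mem_range.mp hin).le)), rfl⟩
    _ ≤ n.sqrt + 1 := card_image_le.trans (card_range _).le

lemma tendsto_card_filter_range_isSquare_div :
    Tendsto (fun n => (#{i ∈ range n | IsSquare i} : ℝ) / n) atTop (𝓝 0) := by
  have hbound : Tendsto (fun n : ℕ => 2 * (√(n : ℝ))⁻¹) atTop (𝓝 0) := by
    simpa using (tendsto_inv_atTop_zero.comp
      (Real.tendsto_sqrt_atTop.comp tendsto_natCast_atTop_atTop)).const_mul 2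
  refine tendsto_of_tendsto_of_tendsto_of_le_of_le' tendsto_const_nhds hbound
    (Eventually.of_forall fun n => by positivity) ?_
  filter_upwards [eventually_ge_atTop 1] with n hn
  have hn' : (1 : ℝ) ≤ n := by exact_mod_cast hn
  have hsqrt : 1 ≤ √(n : ℝ) := Real.one_le_sqrt.mpr hn'
  have hcount : (#{i ∈ range n | IsSquare i} : ℝ) ≤ 2 * √(n : ℝ) := by
    have : (#{i ∈ range n | IsSquare i} : ℝ) ≤ n.sqrt + 1 := by
      exact_mod_cast card_filter_range_isSquare_le n
    linarith [Real.nat_sqrt_le_real_sqrt (a := n)]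
  rw [div_le_iff₀ (by positivity)]
  calc _ ≤ 2 * √(n : ℝ) := hcount
    _ = 2 * (√(n : ℝ))⁻¹ * n := by
        field_simp
        exact Real.sq_sqrt n.cast_nonneg

lemma meanPayoff_zeroAtSquares : meanPayoff zeroAtSquares = 1 :=
  meanPayoff_eq_one_of_tendsto_zeroDensity zeroAtSquares_eq_zero_or_one
    (by simpa [zeroAtSquares] using tendsto_card_filter_range_isSquare_div)

/-- Example 3: no lasso (eventually periodic) `{0,1}`-valued reward sequence with
    infinitely many `0`s has mean payoff `1`; but for every `ε > 0` a periodic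
    such sequence attains mean payoff at least `1 − ε`; and some
    (infinite-memory) sequence with infinitely many `0`s has mean payoff
    exactly `1`. -/
theorem lasso_limit_realizability :
    (¬ ∃ a : ℕ → ℝ, (∀ n, a n = 0 ∨ a n = 1) ∧
        (∃ N p : ℕ, 1 ≤ p ∧ ∀ n, N ≤ n → a (n + p) = a n) ∧
        (∀ N, ∃ n, N ≤ n ∧ a n = 0) ∧
        meanPayoff a = 1) ∧
    (∀ ε : ℝ, 0 < ε → ∃ a : ℕ → ℝ, (∀ n, a n = 0 ∨ a n = 1) ∧
        (∃ p : ℕ, 1 ≤ p ∧ ∀ n, a (n + p) = a n) ∧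
        (∀ N, ∃ n, N ≤ n ∧ a n = 0) ∧
        1 - ε ≤ meanPayoff a) ∧
    (∃ a : ℕ → ℝ, (∀ n, a n = 0 ∨ a n = 1) ∧
        (∀ N, ∃ n, N ≤ n ∧ a n = 0) ∧
        meanPayoff a = 1) := by
  refine ⟨?_, fun ε hε => ?_, ⟨zeroAtSquares, zeroAtSquares_eq_zero_or_one,
    exists_ge_zeroAtSquares_eq_zero, meanPayoff_zeroAtSquares⟩⟩
  · rintro ⟨a, ha, ⟨N, p, hp, hper⟩, hzero, hmean⟩
    exact (meanPayoff_lt_one_of_eventually_periodic ha hp hper hzero).ne hmean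
  · obtain ⟨k, hk⟩ := exists_nat_one_div_lt hε
    have hp : 0 < k + 1 := k.succ_pos
    refine ⟨zeroEvery (k + 1), zeroEvery_eq_zero_or_one _, ⟨k + 1, hp, zeroEvery_add_period _⟩,
      exists_ge_zeroEvery_eq_zero hp, ?_⟩
    have := one_sub_inv_le_meanPayoff_zeroEvery hp
    push_cast at this
    linarith
end

section
/- Suppose every simple cycle C in a finite directed graph (all vertices having out-degree ≥ 1, edge rewards r : E → ℝ bounded by R ≥ 0, rewards nonnegative) satisfies (sum of r over C)/|C| ≥ ℓ with ℓ ≥ 0. Then every infinite path ρ = e₀e₁… in the graph satisfies liminf_{n→∞} (1/n)·Σ_{i<n} r(eᵢ) ≥ ℓ. -/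
open Filter Finset

/-- A simple cycle: a closed walk of length `≥ 1` (written as a vertex list of
    length `≥ 2` with equal first and last vertex), following edges of the
    graph, with no repeated vertex except the endpoint. -/
def IsSimpleCycle {V : Type*} (Adj : V → V → Prop) (c : List V) : Prop :=
  2 ≤ c.length ∧ c.head? = c.getLast? ∧ c.Chain' Adj ∧ c.dropLast.Nodup

/-- Sum of the rewards along a vertex list. -/
def listRewardSum {V : Type*} (r : V → V → ℝ) (c : List V) : ℝ :=
  ((c.zip c.tail).map fun p => r p.1 p.2).sum

open Topology

/-! Removing a shortest repeated segment `ρ a, …, ρ (a + d)` from a finite path cuts out a simple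
cycle, whose reward is at least `ℓ * d`, and leaves a shorter path. Iterating, the first `n` edges
of a path split into simple cycles of total length `n - k` and a simple path with `k < |V|` edges,
so their reward is at least `ℓ * (n - |V|)`. Dividing by `n`, the prefix averages are eventually
above `ℓ - ℓ * |V| / n → ℓ`; they are bounded above by `R`, so their `liminf` is not a junk value. -/

section

variable {V : Type*}

lemma listRewardSum_cons_cons (r : V → V → ℝ) (a b : V) (t : List V) :
    listRewardSum r (a :: b :: t) = r a b + listRewardSum r (b :: t) := by
  simp [listRewardSum]

lemma listRewardSum_map_range (r : V → V → ℝ) (f : ℕ → V) (d : ℕ) :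
    listRewardSum r ((List.range (d + 1)).map f) = ∑ i ∈ range d, r (f i) (f (i + 1)) := by
  induction d generalizing f with
  | zero => simp [listRewardSum]
  | succ d ih =>
    have hshift : ∀ (g : ℕ → V) k,
        (List.range (k + 1)).map g = g 0 :: (List.range k).map (fun i => g (i + 1)) :=
      fun g k => by rw [List.range_succ_eq_map, List.map_cons, List.map_map]; rfl
    have htail := ih (fun i => f (i + 1))
    rw [hshift] at htail
    rw [hshift, hshift (fun i => f (i + 1)), listRewardSum_cons_cons, htail, sum_range_succ' _ d]
    ring

lemma isSimpleCycle_map_range {Adj : V → V → Prop} {f : ℕ → V} {d : ℕ} (hd : 0 < d)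
    (hclosed : f 0 = f d) (hpath : ∀ i < d, Adj (f i) (f (i + 1)))
    (hinj : Set.InjOn f (Set.Iio d)) :
    IsSimpleCycle Adj ((List.range (d + 1)).map f) := by
  refine ⟨by simp; omega, by simp [List.head?_range, List.getLast?_range, hclosed], ?_, ?_⟩
  · show List.IsChain Adj _
    rw [List.isChain_map, List.isChain_range_succ]
    exact hpath
  · rw [List.range_succ, List.map_append, List.map_singleton, List.dropLast_concat]
    exact List.Nodup.map_on (fun x hx y hy hxy => hinj (by simpa using hx) (by simpa using hy) hxy)
      List.nodup_range

lemma mul_le_sum_of_isSimpleCycle {Adj : V → V → Prop} {r : V → V → ℝ} {ℓ : ℝ}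
    (hcyc : ∀ c : List V, IsSimpleCycle Adj c → ℓ ≤ listRewardSum r c / ((c.length : ℝ) - 1))
    {f : ℕ → V} {d : ℕ} (hd : 0 < d) (hclosed : f 0 = f d)
    (hpath : ∀ i < d, Adj (f i) (f (i + 1))) (hinj : Set.InjOn f (Set.Iio d)) :
    ℓ * d ≤ ∑ i ∈ range d, r (f i) (f (i + 1)) := by
  have h := hcyc _ (isSimpleCycle_map_range hd hclosed hpath hinj)
  rwa [listRewardSum_map_range, List.length_map, List.length_range, Nat.cast_add, Nat.cast_one,
    add_sub_cancel_right, le_div_iff₀ (by exact_mod_cast hd)] at h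

lemma lt_card_of_injOn_Iic [Fintype V] {ρ : ℕ → V} {n : ℕ} (hinj : Set.InjOn ρ (Set.Iic n)) :
    n < Fintype.card V := by
  have := card_le_card_of_injOn (s := Finset.Iic n) (t := univ) ρ (fun _ _ => mem_univ _)
    (by rwa [coe_Iic])
  rw [Nat.card_Iic, card_univ] at this
  omega

lemma exists_shortest_repeat {ρ : ℕ → V} {n : ℕ} (h : ¬ Set.InjOn ρ (Set.Iic n)) :
    ∃ a d, 0 < d ∧ a + d ≤ n ∧ ρ a = ρ (a + d) ∧ Set.InjOn (fun i => ρ (a + i)) (Set.Iio d) := by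
  classical
  have hex : ∃ d, 0 < d ∧ ∃ a, a + d ≤ n ∧ ρ a = ρ (a + d) := by
    simp only [Set.InjOn, Set.mem_Iic, not_forall] at h
    obtain ⟨x, hx, y, hy, hxy, hne⟩ := h
    rcases Nat.lt_or_gt_of_ne hne with hlt | hlt
    · exact ⟨y - x, by omega, x, by omega, by rwa [Nat.add_sub_cancel' hlt.le]⟩
    · exact ⟨x - y, by omega, y, by omega, by rw [Nat.add_sub_cancel' hlt.le]; exact hxy.symm⟩
  obtain ⟨hd, a, han, hrep⟩ := Nat.find_spec hex
  have hshort : ∀ x y, x < y → y < Nat.find hex → ρ (a + x) ≠ ρ (a + y) := fun x y hxy hy heq =>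
    Nat.find_min hex (m := y - x) (by omega)
      ⟨by omega, a + x, by omega, by rwa [show a + x + (y - x) = a + y by omega]⟩
  refine ⟨a, Nat.find hex, hd, han, hrep, fun x hx y hy hxy => ?_⟩
  rcases Nat.lt_trichotomy x y with hlt | heq | hgt
  · exact absurd hxy (hshort x y hlt hy)
  · exact heq
  · exact absurd hxy.symm (hshort y x hgt hx)

def skipSegment (ρ : ℕ → V) (a d i : ℕ) : V :=
  if i < a then ρ i else ρ (i + d)

variable {ρ : ℕ → V} {a d : ℕ}

lemma skipSegment_of_le (hrep : ρ a = ρ (a + d)) {i : ℕ} (hi : i ≤ a) :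
    skipSegment ρ a d i = ρ i := by
  unfold skipSegment
  split_ifs
  · rfl
  · rw [show i = a by omega, hrep]

lemma skipSegment_add (i : ℕ) : skipSegment ρ a d (a + i) = ρ (a + d + i) := by
  simp [skipSegment, Nat.add_right_comm]

lemma skipSegment_isPath {Adj : V → V → Prop} (hρ : ∀ i, Adj (ρ i) (ρ (i + 1)))
    (hrep : ρ a = ρ (a + d)) (i : ℕ) :
    Adj (skipSegment ρ a d i) (skipSegment ρ a d (i + 1)) := by
  rcases Nat.lt_or_ge i a with hi | hi
  · rw [skipSegment_of_le hrep hi.le, skipSegment_of_le hrep hi]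
    exact hρ i
  · obtain ⟨j, rfl⟩ := Nat.exists_eq_add_of_le hi
    rw [add_assoc, skipSegment_add, skipSegment_add]
    exact hρ _

lemma sum_range_add_eq_sum_skipSegment {M : Type*} [AddCommMonoid M] (r : V → V → M)
    (hrep : ρ a = ρ (a + d)) {m : ℕ} (ham : a ≤ m) :
    ∑ i ∈ range (m + d), r (ρ i) (ρ (i + 1)) =
      ∑ i ∈ range m, r (skipSegment ρ a d i) (skipSegment ρ a d (i + 1)) +
        ∑ i ∈ range d, r (ρ (a + i)) (ρ (a + i + 1)) := by
  obtain ⟨t, rfl⟩ := Nat.exists_eq_add_of_le ham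
  have hhead : ∀ i ∈ range a, r (skipSegment ρ a d i) (skipSegment ρ a d (i + 1)) =
      r (ρ i) (ρ (i + 1)) := fun i hi => by
    rw [mem_range] at hi
    rw [skipSegment_of_le hrep hi.le, skipSegment_of_le hrep hi]
  rw [show a + t + d = a + (d + t) by omega, sum_range_add, sum_range_add, sum_range_add _ a t,
    sum_congr rfl hhead]
  simp only [add_assoc, skipSegment_add]
  abel

end

theorem exists_lt_card_mul_sub_le_sum {V : Type*} [Fintype V] {Adj : V → V → Prop}
    {r : V → V → ℝ} {ℓ : ℝ} (hr : ∀ u v, 0 ≤ r u v)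
    (hcyc : ∀ c : List V, IsSimpleCycle Adj c → ℓ ≤ listRewardSum r c / ((c.length : ℝ) - 1))
    (n : ℕ) (ρ : ℕ → V) (hρ : ∀ i, Adj (ρ i) (ρ (i + 1))) :
    ∃ k < Fintype.card V, ℓ * ((n : ℝ) - k) ≤ ∑ i ∈ range n, r (ρ i) (ρ (i + 1)) := by
  induction n using Nat.strong_induction_on generalizing ρ with
  | _ n ih =>
  by_cases hinj : Set.InjOn ρ (Set.Iic n)
  · refine ⟨n, lt_card_of_injOn_Iic hinj, by simpa using sum_nonneg fun i _ => hr _ _⟩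
  obtain ⟨a, d, hd, han, hrep, hsimple⟩ := exists_shortest_repeat hinj
  obtain ⟨k, hk, hrest⟩ := ih (n - d) (by omega) _ (skipSegment_isPath hρ hrep)
  have hcycle : ℓ * d ≤ ∑ i ∈ range d, r (ρ (a + i)) (ρ (a + i + 1)) :=
    mul_le_sum_of_isSimpleCycle hcyc hd (by simpa using hrep) (fun i _ => hρ _) hsimple
  refine ⟨k, hk, ?_⟩
  rw [← Nat.sub_add_cancel (show d ≤ n by omega), sum_range_add_eq_sum_skipSegment r hrep
    (by omega), Nat.cast_add]
  linarith

lemma le_liminf_of_tendsto_of_eventually_le {ι α : Type*} [ConditionallyCompleteLinearOrder α]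
    [TopologicalSpace α] [OrderTopology α] {l : Filter ι} [l.NeBot] {u g : ι → α} {a : α}
    (hg : Tendsto g l (𝓝 a)) (hle : ∀ᶠ i in l, g i ≤ u i) (hu : IsBoundedUnder (· ≤ ·) l u) :
    a ≤ liminf u l :=
  hg.liminf_eq ▸ liminf_le_liminf hle hg.isBoundedUnder_ge hu.isCoboundedUnder_ge

theorem cycle_bound_transfers_to_plays_general {V : Type*} [Fintype V]
    (Adj : V → V → Prop)
    (r : V → V → ℝ) (R : ℝ)
    (hr : ∀ u v, 0 ≤ r u v ∧ r u v ≤ R)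
    (ℓ : ℝ) (hℓ : 0 ≤ ℓ)
    (hcyc : ∀ c : List V, IsSimpleCycle Adj c →
      ℓ ≤ listRewardSum r c / ((c.length : ℝ) - 1))
    (ρ : ℕ → V) (hρ : ∀ n, Adj (ρ n) (ρ (n + 1))) :
    ℓ ≤ Filter.liminf
      (fun n : ℕ => (∑ i ∈ Finset.range n, r (ρ i) (ρ (i + 1))) / n) atTop := by
  have hlower : ∀ n : ℕ, ℓ * ((n : ℝ) - Fintype.card V) ≤ ∑ i ∈ range n, r (ρ i) (ρ (i + 1)) :=
    fun n => by
      obtain ⟨k, hk, hle⟩ := exists_lt_card_mul_sub_le_sum (fun u v => (hr u v).1) hcyc n ρ hρ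
      exact le_trans (by gcongr) hle
  have hlim : Tendsto (fun n : ℕ => ℓ - ℓ * Fintype.card V / n) atTop (𝓝 ℓ) := by
    simpa using tendsto_const_nhds.sub (tendsto_const_div_atTop_nhds_zero_nat (ℓ * Fintype.card V))
  refine le_liminf_of_tendsto_of_eventually_le hlim ?_ (isBoundedUnder_of_eventually_le (a := R) ?_)
  all_goals filter_upwards [eventually_gt_atTop 0] with n hn
  · rw [le_div_iff₀ (by positivity), sub_mul, div_mul_cancel₀ _ (by positivity), ← mul_sub]
    exact hlower n
  · rw [div_le_iff₀ (by positivity)]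
    simpa [mul_comm] using sum_le_card_nsmul (range n) _ R fun i _ => (hr _ _).2

/-- Cycle-to-play transfer: if every simple cycle of the graph has mean
    reward at least `ℓ`, then every infinite path has mean payoff (liminf of
    prefix averages) at least `ℓ`. -/
theorem cycle_bound_transfers_to_plays {V : Type*} [Fintype V]
    (Adj : V → V → Prop) (htotal : ∀ v, ∃ w, Adj v w)
    (r : V → V → ℝ) (R : ℝ) (hR : 0 ≤ R)
    (hr : ∀ u v, 0 ≤ r u v ∧ r u v ≤ R)
    (ℓ : ℝ) (hℓ : 0 ≤ ℓ)
    (hcyc : ∀ c : List V, IsSimpleCycle Adj c →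
      ℓ ≤ listRewardSum r c / ((c.length : ℝ) - 1))
    (ρ : ℕ → V) (hρ : ∀ n, Adj (ρ n) (ρ (n + 1))) :
    ℓ ≤ Filter.liminf
      (fun n : ℕ => (∑ i ∈ Finset.range n, r (ρ i) (ρ (i + 1))) / n) atTop :=
  cycle_bound_transfers_to_plays_general Adj r R hr ℓ hℓ hcyc ρ hρ
end

section
/- Let a : ℕ → ℝ be defined by block structure: in round i (for i = 1, 2, 3, …) the sequence takes value 10 for i consecutive steps, then 10 once, then 0 once. Then liminf_{n→∞} (1/n)·Σ_{j<n} a(j) = 10, and the value 0 is taken infinitely often. -/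
/-!
The rewards are all `10` except at the ends of rounds, and round `i` ends at position
`i(i+3)/2 - 1`. So at most `√(2N)` of the first `N` rewards are `0`, and the averages lie between
`10 - 10√(2N)/N` and `10`, so they even converge to `10`.
-/

open Filter Finset Classical

/-- The reward sequence of the infinite-memory optimal strategy of Fig. 5:
    round `i` (for `i = 1, 2, …`) consists of `i + 1` steps of reward `10`
    followed by one step of reward `0`; thus round `i` ends at position
    `∑_{j≤i} (j+2) − 1`, i.e. the zeros sit exactly at positions `n` with
    `2(n+1) = i(i+3)` for some `i ≥ 1`. -/
noncomputable def roundSeq (n : ℕ) : ℝ :=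
  if ∃ i : ℕ, 1 ≤ i ∧ 2 * (n + 1) = i * (i + 3) then 0 else 10

open Topology

theorem tendsto_sum_range_div_of_density_zero {a : ℕ → ℝ} {c M : ℝ} (hM : ∀ n, |a n - c| ≤ M)
    (hdens : Tendsto (fun N : ℕ => (#{n ∈ range N | a n ≠ c} : ℝ) / N) atTop (𝓝 0)) :
    Tendsto (fun N : ℕ => (∑ n ∈ range N, a n) / N) atTop (𝓝 c) := by
  have hdev (N : ℕ) : |∑ n ∈ range N, a n - N * c| ≤ #{n ∈ range N | a n ≠ c} * M :=
    calc |∑ n ∈ range N, a n - N * c| = |∑ n ∈ range N with a n ≠ c, (a n - c)| := by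
          rw [sum_filter_of_ne fun n _ h => sub_ne_zero.1 h, sum_sub_distrib]; simp
      _ ≤ ∑ n ∈ range N with a n ≠ c, |a n - c| := abs_sum_le_sum_abs _ _
      _ ≤ #{n ∈ range N | a n ≠ c} * M := by
          simpa using sum_le_card_nsmul _ _ M fun n _ => hM n
  rw [tendsto_iff_norm_sub_tendsto_zero]
  refine squeeze_zero' (.of_forall fun _ => norm_nonneg _) ?_ (by simpa using hdens.mul_const M)
  filter_upwards [eventually_gt_atTop 0] with N hN
  have hN' : (0 : ℝ) < N := Nat.cast_pos.2 hN
  rw [Real.norm_eq_abs, div_sub' hN'.ne', abs_div, abs_of_pos hN', div_mul_eq_mul_div]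
  exact div_le_div_of_nonneg_right (by linarith [hdev N]) hN'.le

lemma tendsto_sqrt_div_self_atTop : Tendsto (fun x : ℝ => √x / x) atTop (𝓝 0) := by
  simp_rw [Real.sqrt_div_self]
  exact tendsto_inv_atTop_zero.comp Real.tendsto_sqrt_atTop

lemma roundSeq_eq_zero_iff {n : ℕ} :
    roundSeq n = 0 ↔ ∃ i, 1 ≤ i ∧ 2 * (n + 1) = i * (i + 3) := by
  unfold roundSeq; split_ifs with h <;> simp [h]

lemma roundSeq_eq_zero_or_eq_ten (n : ℕ) : roundSeq n = 0 ∨ roundSeq n = 10 := by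
  unfold roundSeq; split_ifs <;> simp

lemma abs_roundSeq_sub_ten_le (n : ℕ) : |roundSeq n - 10| ≤ 10 := by
  rcases roundSeq_eq_zero_or_eq_ten n with h | h <;> norm_num [h]

lemma roundSeq_end_of_even_round (k : ℕ) : roundSeq ((k + 1) * (2 * k + 5) - 1) = 0 := by
  refine roundSeq_eq_zero_iff.2 ⟨2 * (k + 1), by omega, ?_⟩
  rw [Nat.sub_add_cancel (Nat.mul_pos (by omega) (by omega))]
  ring

lemma card_roundSeq_ne_ten_le (N : ℕ) : #{n ∈ range N | roundSeq n ≠ 10} ≤ Nat.sqrt (2 * N) :=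
  calc #{n ∈ range N | roundSeq n ≠ 10}
      ≤ #((Icc 1 (Nat.sqrt (2 * N))).image fun i => i * (i + 3) / 2 - 1) := by
        refine card_le_card fun n hn => ?_
        rw [mem_filter, mem_range] at hn
        obtain ⟨i, hi, hni⟩ :=
          roundSeq_eq_zero_iff.1 ((roundSeq_eq_zero_or_eq_ten n).resolve_right hn.2)
        exact mem_image.2 ⟨i, mem_Icc.2 ⟨hi, Nat.le_sqrt.2 (by nlinarith)⟩, by omega⟩
    _ ≤ #(Icc 1 (Nat.sqrt (2 * N))) := card_image_le
    _ = Nat.sqrt (2 * N) := by simp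

lemma tendsto_card_roundSeq_ne_ten_div :
    Tendsto (fun N : ℕ => (#{n ∈ range N | roundSeq n ≠ 10} : ℝ) / N) atTop (𝓝 0) := by
  have h := (tendsto_sqrt_div_self_atTop.comp
    (tendsto_natCast_atTop_atTop.const_mul_atTop two_pos)).const_mul 2
  refine squeeze_zero (fun _ => by positivity) (fun N => ?_) (by simpa only [Function.comp_def, mul_zero] using h)
  calc (#{n ∈ range N | roundSeq n ≠ 10} : ℝ) / N
      ≤ √(2 * N) / N := by
        gcongr
        exact (Nat.cast_le.2 (card_roundSeq_ne_ten_le N)).trans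
          (by exact_mod_cast Real.nat_sqrt_le_real_sqrt)
    _ = 2 * (√(2 * N) / (2 * N)) := by ring

/-- The infinite-memory strategy achieves mean payoff `10` while taking the
    value `0` infinitely often. -/
theorem infinite_memory_optimal :
    Filter.liminf (fun n : ℕ => (∑ j ∈ Finset.range n, roundSeq j) / n) atTop
      = 10 ∧
    (∀ N : ℕ, ∃ n, N ≤ n ∧ roundSeq n = 0) := by
  refine ⟨?_, fun N => ⟨(N + 1) * (2 * N + 5) - 1, ?_, roundSeq_end_of_even_round N⟩⟩
  · exact (tendsto_sum_range_div_of_density_zero abs_roundSeq_sub_ten_le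
      tendsto_card_roundSeq_ne_ten_div).liminf_eq
  · exact Nat.le_sub_one_of_lt (by nlinarith)
end
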